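/- arXiv:1812.02099 — 3 statements merged into one kernel-verified Lean document; each statement's English description precedes it below -/
import Mathlib

section
/- Let C be an ample concept class over X and let t ⊆ X with t ∉ C. Let F[t] be the smallest cube of 2^X containing t and all concepts of C at Hamming distance 1 from t. Then F[t] ⊆ C ∪ {t}. -/
variable {X : Type} [Fintype X] [DecidableEq X]

/-- Hamming distance between two subsets of `X` (size of symmetric difference). -/
def hdist (c c' : Finset X) : ℕ := ((c \ c') ∪ (c' \ c)).card

/-- The restriction `C|Y = {c ∩ Y : c ∈ C}`. -/
def restrictTo (C : Finset (Finset X)) (Y : Finset X) : Finset (Finset X) :=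
  C.image (· ∩ Y)

/-- `Y` is shattered by `C`, i.e. `C|Y = 2^Y`. -/
def Shatters (C : Finset (Finset X)) (Y : Finset X) : Prop :=
  ∀ s ∈ Y.powerset, ∃ c ∈ C, c ∩ Y = s

instance (C : Finset (Finset X)) : DecidablePred (Shatters C) := fun _ => by
  unfold Shatters; infer_instance

/-- The family `X̄(C)` of all sets shattered by `C`. -/
def shatteredSets (C : Finset (Finset X)) : Finset (Finset X) :=
  Finset.univ.filter (Shatters C)

/-- The VC dimension of `C`: maximum size of a shattered set. -/
def vcDim (C : Finset (Finset X)) : ℕ := (shatteredSets C).sup Finset.card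

/-- `C` is ample: `|C| = |X̄(C)|`. -/
def IsAmple (C : Finset (Finset X)) : Prop := C.card = (shatteredSets C).card

/-- `C` is a maximum class of VC dimension `d`. -/
def IsMaximumClass (C : Finset (Finset X)) (d : ℕ) : Prop :=
  vcDim C = d ∧ C.card = ∑ i ∈ Finset.range (d + 1), (Fintype.card X).choose i

/-- `B` is a cube with support `Y`: `B = {t ∪ s : s ⊆ Y}` for some `t ⊆ X \ Y`. -/
def IsCubeS (B : Finset (Finset X)) (Y : Finset X) : Prop :=
  ∃ t : Finset X, t ∩ Y = ∅ ∧ B = Y.powerset.image (fun s => t ∪ s)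

/-- `B` is a cube. -/
def IsCube (B : Finset (Finset X)) : Prop := ∃ Y, IsCubeS B Y

/-- `B` is a cube of `C`: a cube contained in `C`. -/
def IsCubeOf (C B : Finset (Finset X)) : Prop := B ⊆ C ∧ IsCube B

/-- `B` is a maximal cube of `C` (maximal under inclusion among cubes of `C`). -/
def IsMaximalCubeOf (C B : Finset (Finset X)) : Prop :=
  IsCubeOf C B ∧ ∀ B', IsCubeOf C B' → B ⊆ B' → B = B'

/-- `c` is a corner of `C`: a concept of `C` belonging to a unique maximal cube of `C`. -/
def IsCornerOf (C : Finset (Finset X)) (c : Finset X) : Prop :=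
  c ∈ C ∧ ∃! B, IsMaximalCubeOf C B ∧ c ∈ B

/-- The one-inclusion graph `G(C)`. -/
def oneInclusionGraph (C : Finset (Finset X)) : SimpleGraph {c : Finset X // c ∈ C} where
  Adj c c' := hdist c.1 c'.1 = 1
  symm := by
    constructor
    intro a b h
    simpa [hdist, Finset.union_comm] using h
  loopless := by
    constructor
    intro a h
    simp [hdist] at h

/-- `C` is isometric: `G(C)` is connected and graph distances equal Hamming distances. -/
def IsIsometric (C : Finset (Finset X)) : Prop :=
  (oneInclusionGraph C).Connected ∧
  ∀ c c' : {c : Finset X // c ∈ C}, (oneInclusionGraph C).dist c c' = hdist c.1 c'.1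

/-- `C` is weakly isometric: `G(C)` is connected and graph distances equal Hamming
distances for pairs at Hamming distance at most 2. -/
def IsWeaklyIsometric (C : Finset (Finset X)) : Prop :=
  (oneInclusionGraph C).Connected ∧
  ∀ c c' : {c : Finset X // c ∈ C}, hdist c.1 c'.1 ≤ 2 →
    (oneInclusionGraph C).dist c c' = hdist c.1 c'.1

/-- A list of concepts is a corner peeling if it has no duplicates and each element is a
corner of the corresponding level set. -/
def IsCornerPeeling (l : List (Finset X)) : Prop :=
  l.Nodup ∧ ∀ i (h : i < l.length), IsCornerOf ((l.take (i + 1)).toFinset) (l.get ⟨i, h⟩)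

/-- `C` is dismantlable: it admits a corner peeling ordering of all its concepts. -/
def Dismantlable (C : Finset (Finset X)) : Prop :=
  ∃ l : List (Finset X), l.toFinset = C ∧ IsCornerPeeling l

/-- Non-clashing condition for a map `r`. -/
def NonClashing (C : Finset (Finset X)) (r : Finset X → Finset X) : Prop :=
  ∀ c ∈ C, ∀ c' ∈ C, c ≠ c' → c ∩ (r c ∪ r c') ≠ c' ∩ (r c ∪ r c')

/-- `r` is a representation map for `C`: a non-clashing bijection from `C` onto `X̄(C)`. -/
def IsRepMap (C : Finset (Finset X)) (r : Finset X → Finset X) : Prop :=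
  (∀ c ∈ C, r c ∈ shatteredSets C) ∧
  Set.InjOn r ↑C ∧
  (∀ Y ∈ shatteredSets C, ∃ c ∈ C, r c = Y) ∧
  NonClashing C r

/-- `C` admits an unlabeled sample compression scheme of size `k`. -/
def HasUSCS (C : Finset (Finset X)) (k : ℕ) : Prop :=
  ∃ (α : Finset X → Finset X → Finset X) (β : Finset X → Finset X),
    ∀ (Y : Finset X), ∀ c ∈ C,
      α Y (c ∩ Y) ⊆ Y ∧ (α Y (c ∩ Y)).card ≤ k ∧
      β (α Y (c ∩ Y)) ∈ C ∧ β (α Y (c ∩ Y)) ∩ Y = c ∩ Y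

/-- The cube of `2^X` with support `Y` containing `c`. -/
def cubeAt (c Y : Finset X) : Finset (Finset X) :=
  Y.powerset.image (fun s => (c \ Y) ∪ s)

/-- Condition (C1): for every `c ∈ C`, the cube with support `r c` containing `c`
is a cube of `C`. -/
def CondC1 (C : Finset (Finset X)) (r : Finset X → Finset X) : Prop :=
  ∀ c ∈ C, cubeAt c (r c) ⊆ C

/-- Condition (C2): every cube of `C` has a unique concept `c` with `r c ∩ supp B = ∅`. -/
def CondC2 (C : Finset (Finset X)) (r : Finset X → Finset X) : Prop :=
  ∀ B Y, B ⊆ C → IsCubeS B Y → ∃! c, c ∈ B ∧ r c ∩ Y = ∅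

/-- The facet of the cross-polytope corresponding to a subset `c ⊆ X`:
`+x ∈ σ_c` iff `x ∈ c` (where `+x = Sum.inl x` and `-x = Sum.inr x`). -/
def facet (c : Finset X) : Finset (X ⊕ X) :=
  c.image Sum.inl ∪ (Finset.univ \ c).image Sum.inr

/-- A list of facets of the cross-polytope is a partial shelling. -/
def IsPartialShelling (L : List (Finset (X ⊕ X))) : Prop :=
  L.Nodup ∧ ∀ i j, i < j → j < L.length →
    ∃ k < j, ((L.getD k ∅) ∩ (L.getD j ∅)).card = Fintype.card X - 1 ∧
      (L.getD i ∅) ∩ (L.getD j ∅) ⊆ (L.getD k ∅) ∩ (L.getD j ∅)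

/-- `Q` is an incomplete cube for `(C, D)` with support `σ`: a cube of `C` whose
support `σ` is a missed simplex (shattered by `C` but not by `D`). -/
def IsIncompleteCube (C D Q : Finset (Finset X)) (σ : Finset X) : Prop :=
  Q ⊆ C ∧ IsCubeS Q σ ∧ Shatters C σ ∧ ¬ Shatters D σ

/-- `c` is the source of the incomplete cube `Q` with support `σ`:
`c ∈ Q` and `c ∩ σ ∉ D|σ`. -/
def IsSource (D Q : Finset (Finset X)) (σ : Finset X) (c : Finset X) : Prop :=
  c ∈ Q ∧ c ∩ σ ∉ restrictTo D σ

/-- The restriction `C_x = C|(X \ {x})`, with concepts viewed as subsets of `X`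
avoiding `x`. -/
def restrictX (C : Finset (Finset X)) (x : X) : Finset (Finset X) :=
  C.image (·.erase x)

/-- The reduction `C^x = {c ⊆ X \ {x} : c ∈ C and c ∪ {x} ∈ C}`. -/
def reduction (C : Finset (Finset X)) (x : X) : Finset (Finset X) :=
  C.filter (fun c => x ∉ c ∧ insert x c ∈ C)

/-- The interval `B(c,c') = {t : d(c,t) + d(t,c') = d(c,c')}`. -/
def interval (c c' : Finset X) : Finset (Finset X) :=
  Finset.univ.filter (fun t => hdist c t + hdist t c' = hdist c c')

/-- `C'` is convex in `C`. -/
def IsConvexIn (C C' : Finset (Finset X)) : Prop :=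
  ∀ c ∈ C', ∀ c'' ∈ C', interval c c'' ∩ C ⊆ C'

/-- `C'` is locally convex in `C`. -/
def IsLocallyConvexIn (C C' : Finset (Finset X)) : Prop :=
  ∀ c ∈ C', ∀ c'' ∈ C', hdist c c'' = 2 → interval c c'' ∩ C ⊆ C'

/-- `C` is a conditional antimatroid: contains `∅`, closed under intersection, and
every concept is generated by its extremal points. -/
def IsCondAntimatroid (C : Finset (Finset X)) : Prop :=
  ∅ ∈ C ∧ (∀ c ∈ C, ∀ c' ∈ C, c ∩ c' ∈ C) ∧
  ∀ c ∈ C, ∀ c' ∈ C, (c.filter (fun x => c.erase x ∈ C)) ⊆ c' → c ⊆ c'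

/-!
The complement `𝒜ᶜ` of an ample class is ample: a cube of `𝒜` with support `Y` keeps `𝒜ᶜ` from
shattering `Yᶜ`, so `#𝒜.shatterer + #𝒜ᶜ.shatterer ≤ 2 ^ |X| = #𝒜 + #𝒜ᶜ`, and the
Sauer–Shelah–Pajor inequality `#ℬ ≤ #ℬ.shatterer` forces equality for `𝒜ᶜ`. Ample classes are
geodesic: from `t` towards `u` there is a neighbour of `t` in the class. After translating `t` to
`∅`, a nonempty concept `c ⊆ u` of minimal size spans an ample face `{∅, c}` of the class, which
shatters `∅` and every `{x}` with `x ∈ c`, so `c` is a singleton.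

Now `F[t]` lies in the cube at `t` spanned by the directions `x` with `t ∆ {x} ∈ C`. If some
`c ∈ F[t]` were outside `C ∪ {t}`, the geodesic property of `Cᶜ` would give a neighbour of `t`
outside `C` in one of these directions, which is absurd.
-/

open Finset
open scoped symmDiff

section Families

variable {α : Type} [DecidableEq α] {𝒜 : Finset (Finset α)} {Y c d : Finset α} {a : α}

theorem mem_reduction : c ∈ reduction 𝒜 a ↔ c ∈ 𝒜 ∧ a ∉ c ∧ insert a c ∈ 𝒜 :=
  mem_filter

theorem restrictX_eq_union (𝒜 : Finset (Finset α)) (a : α) :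
    restrictX 𝒜 a = 𝒜.memberSubfamily a ∪ 𝒜.nonMemberSubfamily a :=
  (memberSubfamily_union_nonMemberSubfamily a 𝒜).symm

theorem reduction_eq_inter (𝒜 : Finset (Finset α)) (a : α) :
    reduction 𝒜 a = 𝒜.memberSubfamily a ∩ 𝒜.nonMemberSubfamily a := by
  ext c
  simp only [mem_reduction, mem_inter, mem_memberSubfamily, mem_nonMemberSubfamily]
  tauto

theorem reduction_subset_restrictX (𝒜 : Finset (Finset α)) (a : α) :
    reduction 𝒜 a ⊆ restrictX 𝒜 a := by
  rw [restrictX_eq_union, reduction_eq_inter]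
  exact inter_subset_union

theorem notMem_of_shatters_restrictX (hY : (restrictX 𝒜 a).Shatters Y) : a ∉ Y := by
  obtain ⟨c, hc, hYc⟩ := hY.exists_superset
  obtain ⟨d, -, rfl⟩ := mem_image.1 hc
  exact fun ha => notMem_erase a d (hYc ha)

theorem notMem_of_shatters_reduction (hY : (reduction 𝒜 a).Shatters Y) : a ∉ Y :=
  notMem_of_shatters_restrictX (hY.mono_left (reduction_subset_restrictX 𝒜 a))

theorem Finset.Shatters.of_restrictX (hY : (restrictX 𝒜 a).Shatters Y) : 𝒜.Shatters Y := by
  intro u hu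
  obtain ⟨c, hc, rfl⟩ := hY hu
  obtain ⟨d, hd, rfl⟩ := mem_image.1 hc
  refine ⟨d, hd, ?_⟩
  rw [inter_erase, erase_eq_of_notMem fun ha =>
    notMem_of_shatters_restrictX hY (mem_of_mem_inter_left ha)]

theorem Finset.Shatters.insert_of_memberSubfamily (h₁ : (𝒜.memberSubfamily a).Shatters Y)
    (h₀ : (𝒜.nonMemberSubfamily a).Shatters Y) : 𝒜.Shatters (insert a Y) := by
  intro u hu
  rw [subset_insert_iff] at hu
  by_cases ha : a ∈ u
  · obtain ⟨v, hv, hYv⟩ := h₁ hu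
    rw [mem_memberSubfamily] at hv
    exact ⟨_, hv.1, by rw [← insert_inter_distrib, hYv, insert_erase ha]⟩
  · obtain ⟨v, hv, hYv⟩ := h₀ hu
    rw [mem_nonMemberSubfamily] at hv
    exact ⟨_, hv.1, by rwa [insert_inter_of_notMem hv.2, erase_eq_of_notMem ha] at *⟩

theorem Finset.Shatters.insert_of_reduction (hY : (reduction 𝒜 a).Shatters Y) :
    𝒜.Shatters (insert a Y) := by
  rw [reduction_eq_inter] at hY
  exact (hY.mono_left inter_subset_left).insert_of_memberSubfamily
    (hY.mono_left inter_subset_right)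

theorem shatterer_restrictX_union_subset (𝒜 : Finset (Finset α)) (a : α) :
    (restrictX 𝒜 a).shatterer ∪ (reduction 𝒜 a).shatterer.image (insert a) ⊆ 𝒜.shatterer := by
  refine union_subset (fun Y hY => ?_) (forall_mem_image.2 fun Y hY => ?_) <;>
    rw [mem_shatterer] at hY ⊢
  · exact hY.of_restrictX
  · exact hY.insert_of_reduction

theorem card_shatterer_restrictX_union (𝒜 : Finset (Finset α)) (a : α) :
    #((restrictX 𝒜 a).shatterer ∪ (reduction 𝒜 a).shatterer.image (insert a)) =
      #(restrictX 𝒜 a).shatterer + #(reduction 𝒜 a).shatterer := by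
  have hred : ∀ Y ∈ (reduction 𝒜 a).shatterer, a ∉ Y := fun Y hY =>
    notMem_of_shatters_reduction (mem_shatterer.1 hY)
  rw [card_union_of_disjoint, card_image_of_injOn]
  · intro Y hY Z hZ h
    rw [← erase_insert (hred Y hY), ← erase_insert (hred Z hZ)]
    exact congrArg (erase · a) h
  · rw [disjoint_right]
    rintro _ hYa hY
    obtain ⟨Y, -, rfl⟩ := mem_image.1 hYa
    exact notMem_of_shatters_restrictX (mem_shatterer.1 hY) (mem_insert_self a Y)

theorem Finset.Shatters.image_symmDiff (hY : 𝒜.Shatters Y) (s : Finset α) :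
    (𝒜.image (s ∆ ·)).Shatters Y := by
  intro u hu
  obtain ⟨c, hc, hYc⟩ := hY (show (Y ∩ s) ∆ u ⊆ Y from
    symmDiff_le_sup.trans (sup_le inf_le_left hu))
  refine ⟨s ∆ c, mem_image_of_mem _ hc, ?_⟩
  rw [← inf_eq_inter, inf_symmDiff_distrib_left, inf_eq_inter, inf_eq_inter, hYc,
    symmDiff_symmDiff_cancel_left]

theorem mem_cubeAt : d ∈ cubeAt c Y ↔ c ∆ d ⊆ Y := by
  simp only [cubeAt, mem_image, mem_powerset]
  constructor
  · rintro ⟨s, hs, rfl⟩ x hx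
    simp only [mem_symmDiff, mem_union, mem_sdiff] at hx
    by_contra hxY
    tauto
  · intro h
    refine ⟨d ∩ Y, inter_subset_right, ?_⟩
    ext x
    have := @h x
    simp only [mem_symmDiff, mem_union, mem_sdiff, mem_inter] at this ⊢
    tauto

theorem isCube_cubeAt (c Y : Finset α) : IsCube (cubeAt c Y) :=
  ⟨Y, c \ Y, sdiff_inter_self Y c, rfl⟩

theorem hdist_eq_card_symmDiff (c d : Finset α) : hdist c d = #(c ∆ d) := by
  rw [hdist, symmDiff_def, sup_eq_union]

end Families

section Ample

variable {𝒜 : Finset (Finset X)} {Y : Finset X}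

theorem shatteredSets_eq_shatterer (𝒜 : Finset (Finset X)) :
    shatteredSets 𝒜 = 𝒜.shatterer := by
  ext Y
  simp [shatteredSets, _root_.Shatters, Finset.Shatters, inter_comm]

theorem isAmple_iff_card_shatterer_le : IsAmple 𝒜 ↔ #𝒜.shatterer ≤ #𝒜 := by
  rw [IsAmple, shatteredSets_eq_shatterer]
  exact ⟨fun h => h.ge, fun h => le_antisymm (card_le_card_shatterer 𝒜) h⟩

theorem IsAmple.restrictX_reduction (h : IsAmple 𝒜) (a : X) :
    IsAmple (restrictX 𝒜 a) ∧ IsAmple (reduction 𝒜 a) ∧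
      (restrictX 𝒜 a).shatterer ∪ (reduction 𝒜 a).shatterer.image (insert a) =
        𝒜.shatterer := by
  have hcard : #(restrictX 𝒜 a) + #(reduction 𝒜 a) = #𝒜 := by
    rw [restrictX_eq_union, reduction_eq_inter, card_union_add_card_inter,
      card_memberSubfamily_add_card_nonMemberSubfamily]
  have hsub := shatterer_restrictX_union_subset 𝒜 a
  have hle := card_le_card hsub
  have hR := card_le_card_shatterer (restrictX 𝒜 a)
  have hQ := card_le_card_shatterer (reduction 𝒜 a)
  rw [card_shatterer_restrictX_union] at hle
  rw [isAmple_iff_card_shatterer_le] at h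
  refine ⟨isAmple_iff_card_shatterer_le.2 (by omega), isAmple_iff_card_shatterer_le.2 (by omega),
    eq_of_subset_of_card_le hsub (by rw [card_shatterer_restrictX_union]; omega)⟩

theorem IsAmple.shatters_reduction {a : X} (h : IsAmple 𝒜) (hY : 𝒜.Shatters (insert a Y))
    (ha : a ∉ Y) : (reduction 𝒜 a).Shatters Y := by
  rw [← mem_shatterer, ← (h.restrictX_reduction a).2.2, mem_union, mem_image] at hY
  obtain hY | ⟨Z, hZ, hZY⟩ := hY
  · exact absurd (mem_insert_self a Y) (notMem_of_shatters_restrictX (mem_shatterer.1 hY))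
  · rw [mem_shatterer] at hZ
    rwa [← erase_insert ha, ← hZY, erase_insert (notMem_of_shatters_reduction hZ)]

theorem IsAmple.nonMemberSubfamily (h : IsAmple 𝒜) (a : X) :
    IsAmple (𝒜.nonMemberSubfamily a) := by
  obtain ⟨hR, hQ, -⟩ := h.restrictX_reduction a
  rw [isAmple_iff_card_shatterer_le, restrictX_eq_union] at hR
  rw [isAmple_iff_card_shatterer_le, reduction_eq_inter] at hQ
  have hunion : (𝒜.memberSubfamily a).shatterer ∪ (𝒜.nonMemberSubfamily a).shatterer ⊆
      (𝒜.memberSubfamily a ∪ 𝒜.nonMemberSubfamily a).shatterer :=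
    union_subset (shatterer_mono subset_union_left) (shatterer_mono subset_union_right)
  have hinter : (𝒜.memberSubfamily a).shatterer ∩ (𝒜.nonMemberSubfamily a).shatterer ⊆
      (𝒜.memberSubfamily a ∩ 𝒜.nonMemberSubfamily a).shatterer := by
    intro Y hY
    simp only [mem_inter, mem_shatterer] at hY
    obtain ⟨c, hc, hYc⟩ := hY.2.exists_superset
    rw [← reduction_eq_inter, mem_shatterer]
    exact h.shatters_reduction (hY.1.insert_of_memberSubfamily hY.2)
      fun ha => (mem_nonMemberSubfamily.1 hc).2 (hYc ha)
  set 𝒜₁ := 𝒜.memberSubfamily a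
  set 𝒜₀ := 𝒜.nonMemberSubfamily a
  have hcount : #𝒜₁.shatterer + #𝒜₀.shatterer ≤ #𝒜₁ + #𝒜₀ := calc
    _ = #(𝒜₁.shatterer ∪ 𝒜₀.shatterer) + #(𝒜₁.shatterer ∩ 𝒜₀.shatterer) :=
      (card_union_add_card_inter _ _).symm
    _ ≤ #(𝒜₁ ∪ 𝒜₀).shatterer + #(𝒜₁ ∩ 𝒜₀).shatterer :=
      Nat.add_le_add (card_le_card hunion) (card_le_card hinter)
    _ ≤ #(𝒜₁ ∪ 𝒜₀) + #(𝒜₁ ∩ 𝒜₀) := Nat.add_le_add hR hQ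
    _ = #𝒜₁ + #𝒜₀ := card_union_add_card_inter _ _
  have := card_le_card_shatterer 𝒜₁
  rw [isAmple_iff_card_shatterer_le]
  omega

theorem IsAmple.filter_disjoint (h : IsAmple 𝒜) (B : Finset X) :
    IsAmple (𝒜.filter (Disjoint · B)) := by
  induction B using Finset.induction_on with
  | empty => simpa using h
  | insert a B _ ih =>
    convert ih.nonMemberSubfamily a using 1
    ext c
    simp only [mem_filter, mem_nonMemberSubfamily, disjoint_insert_right]
    tauto

theorem IsAmple.filter_subset (h : IsAmple 𝒜) (A : Finset X) : IsAmple (𝒜.filter (· ⊆ A)) := by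
  simpa [← subset_compl_iff_disjoint_right] using h.filter_disjoint Aᶜ

theorem IsAmple.image_symmDiff (h : IsAmple 𝒜) (s : Finset X) :
    IsAmple (𝒜.image (s ∆ ·)) := by
  have hinv : (𝒜.image (s ∆ ·)).image (s ∆ ·) = 𝒜 := by
    simp [image_image, Function.comp_def, symmDiff_symmDiff_cancel_left]
  rw [isAmple_iff_card_shatterer_le] at h ⊢
  rw [card_image_of_injective _ (symmDiff_right_injective s)]
  refine le_trans (card_le_card fun Y hY => ?_) h
  rw [mem_shatterer] at hY ⊢
  simpa [hinv] using hY.image_symmDiff s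

theorem IsAmple.exists_singleton_mem (h : IsAmple 𝒜) {A : Finset X} (h₀ : ∅ ∈ 𝒜) (hA : A ∈ 𝒜)
    (hA₀ : A.Nonempty) : ∃ x ∈ A, {x} ∈ 𝒜 := by
  obtain ⟨c, hc, hmin⟩ := exists_min_image (𝒜.filter fun c => c.Nonempty ∧ c ⊆ A) card
    ⟨A, mem_filter.2 ⟨hA, hA₀, subset_rfl⟩⟩
  obtain ⟨hc𝒜, hc₀, hcA⟩ := mem_filter.1 hc
  have hface : 𝒜.filter (· ⊆ c) ⊆ {∅, c} := by
    intro d hd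
    obtain ⟨hd𝒜, hdc⟩ := mem_filter.1 hd
    rcases d.eq_empty_or_nonempty with rfl | hd₀
    · exact mem_insert_self _ _
    · exact mem_insert_of_mem <| mem_singleton.2 <| eq_of_subset_of_card_le hdc <|
        hmin d (mem_filter.2 ⟨hd𝒜, hd₀, hdc.trans hcA⟩)
  have hsh : insert ∅ (c.image singleton) ⊆ (𝒜.filter (· ⊆ c)).shatterer := by
    refine insert_subset (mem_shatterer.2 (shatters_empty.2 ⟨c, mem_filter.2 ⟨hc𝒜, subset_rfl⟩⟩))
      (forall_mem_image.2 fun x hx => mem_shatterer.2 fun u hu => ?_)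
    rcases subset_singleton_iff.1 hu with rfl | rfl
    · exact ⟨∅, mem_filter.2 ⟨h₀, empty_subset c⟩, inter_empty _⟩
    · exact ⟨c, mem_filter.2 ⟨hc𝒜, subset_rfl⟩, inter_eq_left.2 (singleton_subset_iff.2 hx)⟩
  have hcard := (card_le_card hsh).trans (isAmple_iff_card_shatterer_le.1 (h.filter_subset c))
  rw [card_insert_of_notMem (by simp), card_image_of_injective _ singleton_injective] at hcard
  have := (card_le_card hface).trans card_le_two
  obtain ⟨x, rfl⟩ := (card_eq_one (s := c)).1 (by have := hc₀.card_pos; omega)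
  exact ⟨x, hcA (mem_singleton_self x), hc𝒜⟩

theorem IsAmple.exists_symmDiff_singleton_mem (h : IsAmple 𝒜) {t u : Finset X} (ht : t ∈ 𝒜)
    (hu : u ∈ 𝒜) (htu : t ≠ u) : ∃ x ∈ t ∆ u, t ∆ {x} ∈ 𝒜 := by
  obtain ⟨x, hx, hx𝒜⟩ := (h.image_symmDiff t).exists_singleton_mem
    (by simpa using mem_image_of_mem (t ∆ ·) ht) (mem_image_of_mem _ hu)
    (nonempty_iff_ne_empty.2 (symmDiff_eq_bot.not.2 htu))
  obtain ⟨d, hd, hdx⟩ := mem_image.1 hx𝒜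
  refine ⟨x, hx, ?_⟩
  rwa [← hdx, symmDiff_symmDiff_cancel_left]

theorem IsAmple.exists_cubeAt_subset (h : IsAmple 𝒜) (hY : 𝒜.Shatters Y) :
    ∃ c, cubeAt c Y ⊆ 𝒜 := by
  induction Y using Finset.induction_on generalizing 𝒜 with
  | empty =>
    obtain ⟨c, hc⟩ := shatters_empty.1 hY
    refine ⟨c, fun d hd => ?_⟩
    rwa [← symmDiff_eq_bot.1 (subset_empty.1 (mem_cubeAt.1 hd))]
  | insert a Y haY ih =>
    obtain ⟨c, hc⟩ := ih (h.restrictX_reduction a).2.1 (h.shatters_reduction hY haY)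
    have hac : a ∉ c := (mem_reduction.1 (hc (mem_cubeAt.2 (by simp)))).2.1
    refine ⟨c, fun d hd => ?_⟩
    have hd' : d.erase a ∈ reduction 𝒜 a := hc <| mem_cubeAt.2 fun x hx => by
      have : x ∈ c ∆ d → x ∈ insert a Y := fun h => mem_cubeAt.1 hd h
      simp only [mem_symmDiff, mem_erase, mem_insert] at hx this
      grind
    obtain ⟨hd𝒜, -, hins⟩ := mem_reduction.1 hd'
    by_cases had : a ∈ d
    · rwa [insert_erase had] at hins
    · rwa [erase_eq_of_notMem had] at hd𝒜

theorem IsAmple.compl (h : IsAmple 𝒜) : IsAmple 𝒜ᶜ := by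
  have hdisj : Disjoint (𝒜.shatterer.image (·ᶜ)) 𝒜ᶜ.shatterer := by
    rw [disjoint_left]
    rintro _ hYc' hYc
    obtain ⟨Y, hY, rfl⟩ := mem_image.1 hYc'
    obtain ⟨c, hc⟩ := h.exists_cubeAt_subset (mem_shatterer.1 hY)
    obtain ⟨d, hd, hdc⟩ := mem_shatterer.1 hYc (inter_subset_left : Yᶜ ∩ c ⊆ Yᶜ)
    refine mem_compl.1 hd (hc (mem_cubeAt.2 fun x hx => ?_))
    have := congrArg (x ∈ ·) hdc
    simp only [mem_inter, mem_compl, eq_iff_iff] at this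
    simp only [mem_symmDiff] at hx
    tauto
  have := card_le_univ (𝒜.shatterer.image (·ᶜ) ∪ 𝒜ᶜ.shatterer)
  rw [card_union_of_disjoint hdisj, card_image_of_injective _ compl_injective,
    ← card_add_card_compl 𝒜] at this
  rw [IsAmple, shatteredSets_eq_shatterer] at h
  rw [isAmple_iff_card_shatterer_le]
  omega

end Ample

theorem stmt_3_general (C : Finset (Finset X)) (hC : IsAmple C) (t : Finset X) (ht : t ∉ C)
    (F : Finset (Finset X))
    (hmin : ∀ B, IsCube B → t ∈ B → (∀ c ∈ C, hdist c t = 1 → c ∈ B) → F ⊆ B) :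
    F ⊆ C ∪ {t} := by
  set S := univ.filter fun x => t ∆ {x} ∈ C
  have hFS : F ⊆ cubeAt t S := by
    refine hmin _ (isCube_cubeAt t S) (mem_cubeAt.2 (by simp)) fun c hc hct => ?_
    obtain ⟨x, hx⟩ := card_eq_one.1 (hdist_eq_card_symmDiff c t ▸ hct)
    rw [symmDiff_comm] at hx
    rw [mem_cubeAt, hx, singleton_subset_iff, mem_filter, ← hx, symmDiff_symmDiff_cancel_left]
    exact ⟨mem_univ x, hc⟩
  intro c hcF
  rw [mem_union, mem_singleton]
  by_contra! hc
  obtain ⟨x, hx, hxC⟩ := hC.compl.exists_symmDiff_singleton_mem (mem_compl.2 ht)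
    (mem_compl.2 hc.1) (Ne.symm hc.2)
  exact mem_compl.1 hxC (mem_filter.1 (mem_cubeAt.1 (hFS hcF) hx)).2

/-- If `C` is ample and `t ∉ C`, then the smallest cube `F[t]` containing
`t` and all concepts of `C` at Hamming distance 1 from `t` satisfies `F[t] ⊆ C ∪ {t}`. -/
theorem stmt_3 (C : Finset (Finset X)) (hC : IsAmple C) (t : Finset X) (ht : t ∉ C)
    (F : Finset (Finset X)) (hcube : IsCube F) (htF : t ∈ F)
    (hnb : ∀ c ∈ C, hdist c t = 1 → c ∈ F)
    (hmin : ∀ B, IsCube B → t ∈ B → (∀ c ∈ C, hdist c t = 1 → c ∈ B) → F ⊆ B) :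
    F ⊆ C ∪ {t} :=
  stmt_3_general C hC t ht F hmin
end

section
/- If C is an ample concept class and c is a corner of C (a concept belonging to a unique maximal cube of C), then C \ {c} is ample. -/
variable {X : Type} [Fintype X] [DecidableEq X]

/-!
Splitting a class along a coordinate `x` into the concepts with and without `x` is the step of
Pajor's inequality `|C| ≤ |X̄(C)|`, and for ample `C` that step loses nothing: both halves are
ample, hence so is every subclass of `C` cut out by a subcube. Given `c ≠ c'` in `C`, take
`d ≠ c` in `C` differing from `c` only where `c'` does, with `|c ∆ d|` minimal; the subcube
spanned by `c` and `d` then cuts out the ample class `{c, d}`, so `d = c ∆ {z}` is a neighbour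
of `c`, with `z ∈ c ∆ c'`. If `c` is a corner whose maximal cube has support `Y`, every edge at
`c` lies in that cube, so `z ∈ Y`: no other concept has the trace of `c` on `Y`. Thus `Y` is
shattered by `C` but not by `C \ {c}`, and Pajor's inequality for `C \ {c}` forces
`|X̄(C \ {c})| = |C| - 1`.
-/

open Finset

section Shatterer

variable {α : Type*} [DecidableEq α]

lemma Finset.Shatters.notMem_of_forall_mem {𝒜 : Finset (Finset α)} {s : Finset α} {a : α}
    (hs : 𝒜.Shatters s) (ha : ∀ u ∈ 𝒜, a ∈ u) : a ∉ s := by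
  obtain ⟨u, hu, hsu⟩ := hs (empty_subset s)
  exact fun has => notMem_empty a (hsu ▸ mem_inter.2 ⟨has, ha u hu⟩)

lemma Finset.Shatters.notMem_of_forall_notMem {𝒜 : Finset (Finset α)} {s : Finset α} {a : α}
    (hs : 𝒜.Shatters s) (ha : ∀ u ∈ 𝒜, a ∉ u) : a ∉ s := by
  obtain ⟨u, hu, hsu⟩ := hs.exists_superset
  exact fun has => ha u hu (hsu has)

lemma Finset.Shatters.insert_of_filter {𝒜 : Finset (Finset α)} {s : Finset α} {a : α}
    (h₁ : (𝒜.filter (a ∈ ·)).Shatters s) (h₀ : (𝒜.filter (a ∉ ·)).Shatters s) :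
    𝒜.Shatters (insert a s) := by
  intro t ht
  by_cases hat : a ∈ t
  · obtain ⟨u, hu, hsu⟩ := h₁ (show t.erase a ⊆ s by simpa [subset_insert_iff] using ht)
    rw [mem_filter] at hu
    exact ⟨u, hu.1, by rw [insert_inter_of_mem hu.2, hsu, insert_erase hat]⟩
  · obtain ⟨u, hu, hsu⟩ := h₀ ((subset_insert_iff_of_notMem hat).1 ht)
    rw [mem_filter] at hu
    exact ⟨u, hu.1, by rw [insert_inter_of_notMem hu.2, hsu]⟩

theorem Finset.card_shatterer_filter_mem_add_card_shatterer_filter_notMem_le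
    (𝒜 : Finset (Finset α)) (a : α) :
    #(𝒜.filter (a ∈ ·)).shatterer + #(𝒜.filter (a ∉ ·)).shatterer ≤ #𝒜.shatterer := by
  set 𝒮₁ := (𝒜.filter (a ∈ ·)).shatterer
  set 𝒮₀ := (𝒜.filter (a ∉ ·)).shatterer
  have notMem₁ : ∀ s ∈ 𝒮₁, a ∉ s := fun s hs =>
    (mem_shatterer.1 hs).notMem_of_forall_mem fun u hu => (mem_filter.1 hu).2
  have notMem₀ : ∀ s ∈ 𝒮₀, a ∉ s := fun s hs =>
    (mem_shatterer.1 hs).notMem_of_forall_notMem fun u hu => (mem_filter.1 hu).2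
  have card_image : #((𝒮₁ ∩ 𝒮₀).image (insert a)) = #(𝒮₁ ∩ 𝒮₀) :=
    card_image_of_injOn fun s hs t ht hst => by
      rw [← erase_insert (notMem₀ s (mem_inter.1 hs).2),
        ← erase_insert (notMem₀ t (mem_inter.1 ht).2)]
      exact congrArg (erase · a) hst
  have disjoint : Disjoint (𝒮₁ ∪ 𝒮₀) ((𝒮₁ ∩ 𝒮₀).image (insert a)) := by
    refine disjoint_left.2 fun s hs hs' => ?_
    obtain ⟨t, -, rfl⟩ := mem_image.1 hs'
    rcases mem_union.1 hs with h | h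
    · exact notMem₁ _ h (mem_insert_self a t)
    · exact notMem₀ _ h (mem_insert_self a t)
  have subset : (𝒮₁ ∪ 𝒮₀) ∪ (𝒮₁ ∩ 𝒮₀).image (insert a) ⊆ 𝒜.shatterer := by
    refine union_subset (union_subset ?_ ?_) ?_
    · exact shatterer_mono (filter_subset _ _)
    · exact shatterer_mono (filter_subset _ _)
    · intro s hs
      obtain ⟨t, ht, rfl⟩ := mem_image.1 hs
      rw [mem_inter, mem_shatterer, mem_shatterer] at ht
      exact mem_shatterer.2 (ht.1.insert_of_filter ht.2)
  calc #𝒮₁ + #𝒮₀ = #(𝒮₁ ∪ 𝒮₀) + #((𝒮₁ ∩ 𝒮₀).image (insert a)) := by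
        rw [card_image, card_union_add_card_inter]
    _ = #((𝒮₁ ∪ 𝒮₀) ∪ (𝒮₁ ∩ 𝒮₀).image (insert a)) := (card_union_of_disjoint disjoint).symm
    _ ≤ #𝒜.shatterer := card_le_card subset

theorem Finset.card_symmDiff_lt_card_shatterer_pair (c d : Finset α) :
    #(symmDiff c d) < #({c, d} : Finset (Finset α)).shatterer := by
  have shatters_singleton : ∀ y ∈ symmDiff c d, ({c, d} : Finset (Finset α)).Shatters {y} := by
    intro y hy t ht
    rcases subset_singleton_iff.1 ht with rfl | rfl <;>
      rcases mem_symmDiff.1 hy with ⟨hc, hd⟩ | ⟨hd, hc⟩ <;> simp [*]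
  have subset : cons ∅ ((symmDiff c d).map ⟨({·}), singleton_injective⟩)
      (by simp) ⊆ ({c, d} : Finset (Finset α)).shatterer := by
    intro s hs
    rcases mem_cons.1 hs with rfl | hs
    · simp
    · obtain ⟨y, hy, rfl⟩ := mem_map.1 hs
      exact mem_shatterer.2 (shatters_singleton y hy)
  simpa using card_le_card subset

end Shatterer

lemma isAmple_iff {C : Finset (Finset X)} : IsAmple C ↔ #C = #C.shatterer := by
  have : shatteredSets C = C.shatterer := by
    ext Y
    simp [shatteredSets, _root_.Shatters, Finset.Shatters, inter_comm Y]
  rw [IsAmple, this]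

namespace IsAmple

variable {C : Finset (Finset X)}

lemma filter_mem (hC : IsAmple C) (a : X) :
    IsAmple (C.filter (a ∈ ·)) ∧ IsAmple (C.filter (a ∉ ·)) := by
  simp only [isAmple_iff] at hC ⊢
  have split := C.card_shatterer_filter_mem_add_card_shatterer_filter_notMem_le a
  have pajor₁ := (C.filter (a ∈ ·)).card_le_card_shatterer
  have pajor₀ := (C.filter (a ∉ ·)).card_le_card_shatterer
  have halves : #(C.filter (a ∈ ·)) + #(C.filter (a ∉ ·)) = #C :=
    C.card_filter_add_card_filter_not _
  constructor <;> omega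

lemma filter_mem_iff (hC : IsAmple C) (a : X) (c : Finset X) :
    IsAmple (C.filter fun d => a ∈ d ↔ a ∈ c) := by
  by_cases ha : a ∈ c
  · simpa [ha] using (hC.filter_mem a).1
  · simpa [ha] using (hC.filter_mem a).2

lemma filter_forall_mem_iff (hC : IsAmple C) (c S : Finset X) :
    IsAmple (C.filter fun d => ∀ a ∈ S, a ∈ d ↔ a ∈ c) := by
  induction S using Finset.induction_on with
  | empty => simpa using hC
  | insert a S _ ih =>
    simpa only [filter_filter, forall_mem_insert, and_comm] using ih.filter_mem_iff a c

lemma filter_symmDiff_subset (hC : IsAmple C) (c Y : Finset X) :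
    IsAmple (C.filter fun d => symmDiff c d ⊆ Y) := by
  convert hC.filter_forall_mem_iff c (univ \ Y) using 2 with d
  simp only [subset_iff, mem_symmDiff, mem_sdiff, mem_univ, true_and]
  exact ⟨fun h a haY => by have := @h a; tauto,
    fun h a ha => by_contra fun haY => by have := h a haY; tauto⟩

lemma exists_symmDiff_singleton_mem_s4 (hC : IsAmple C) {c c' : Finset X} (hc : c ∈ C)
    (hc' : c' ∈ C) (hne : c ≠ c') : ∃ z ∈ symmDiff c c', symmDiff c {z} ∈ C := by
  obtain ⟨d, hd, hmin⟩ := (C.filter fun d => d ≠ c ∧ symmDiff c d ⊆ symmDiff c c').exists_min_image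
    (fun d => #(symmDiff c d)) ⟨c', mem_filter.2 ⟨hc', hne.symm, subset_rfl⟩⟩
  obtain ⟨hdC, hdc, hdc'⟩ := mem_filter.1 hd
  have fiber : C.filter (fun e => symmDiff c e ⊆ symmDiff c d) = {c, d} := by
    ext e
    simp only [mem_filter, mem_insert, mem_singleton]
    constructor
    · rintro ⟨heC, hed⟩
      refine or_iff_not_imp_left.2 fun hec => symmDiff_right_injective c ?_
      exact eq_of_subset_of_card_le hed (hmin e (mem_filter.2 ⟨heC, hec, hed.trans hdc'⟩))
    · rintro (rfl | rfl)
      · simp [hc]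
      · exact ⟨hdC, subset_rfl⟩
  have pair := hC.filter_symmDiff_subset c (symmDiff c d)
  rw [fiber, isAmple_iff] at pair
  have : #(symmDiff c d) = 1 := by
    have := card_symmDiff_lt_card_shatterer_pair c d
    have := card_le_two (a := c) (b := d)
    have := card_pos.2 (nonempty_iff_ne_empty.2 fun h => hdc (symmDiff_eq_bot.1 h).symm)
    omega
  obtain ⟨z, hz⟩ := card_eq_one.1 this
  refine ⟨z, hdc' (hz ▸ mem_singleton_self z), ?_⟩
  rwa [← hz, symmDiff_symmDiff_cancel_left]

end IsAmple

section Cubes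

omit [Fintype X]

variable {B C : Finset (Finset X)}

lemma IsCubeS.shatters {Y : Finset X} (hB : IsCubeS B Y) (hBC : B ⊆ C) : C.Shatters Y := by
  obtain ⟨t, htY, rfl⟩ := hB
  intro s hs
  refine ⟨t ∪ s, hBC (mem_image.2 ⟨s, mem_powerset.2 hs, rfl⟩), ?_⟩
  rw [inter_union_distrib_left, inter_comm, htY, empty_union, inter_eq_right.2 hs]

lemma IsCubeS.mem_iff_of_notMem {Y d e : Finset X} {a : X} (hB : IsCubeS B Y) (hd : d ∈ B)
    (he : e ∈ B) (ha : a ∉ Y) : a ∈ d ↔ a ∈ e := by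
  obtain ⟨t, -, rfl⟩ := hB
  obtain ⟨s, hs, rfl⟩ := mem_image.1 hd
  obtain ⟨s', hs', rfl⟩ := mem_image.1 he
  have := mt (@mem_powerset.1 hs a)
  have := mt (@mem_powerset.1 hs' a)
  simp only [mem_union]
  tauto

lemma IsCubeS.subset_of_subset {B' : Finset (Finset X)} {Y Y' : Finset X} (hB : IsCubeS B Y)
    (hB' : IsCubeS B' Y') (h : B ⊆ B') : Y ⊆ Y' := by
  obtain ⟨t, htY, rfl⟩ := hB
  intro z hz
  by_contra hzY'
  have hzt : z ∉ t := fun hzt => notMem_empty z (htY ▸ mem_inter.2 ⟨hzt, hz⟩)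
  have := hB'.mem_iff_of_notMem
    (h (mem_image.2 ⟨∅, empty_mem_powerset Y, union_empty t⟩))
    (h (mem_image.2 ⟨{z}, mem_powerset.2 (singleton_subset_iff.2 hz), rfl⟩)) hzY'
  simp [hzt] at this

lemma mem_cubeAt_self (c Y : Finset X) : c ∈ cubeAt c Y :=
  mem_image.2 ⟨c ∩ Y, mem_powerset.2 inter_subset_right, sdiff_union_inter c Y⟩

lemma isCubeS_cubeAt (c Y : Finset X) : IsCubeS (cubeAt c Y) Y :=
  ⟨c \ Y, sdiff_inter_self Y c, rfl⟩

lemma cubeAt_singleton_subset {c : Finset X} {z : X} (hc : c ∈ C) (hz : symmDiff c {z} ∈ C) :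
    cubeAt c {z} ⊆ C := by
  intro d hd
  obtain ⟨s, hs, rfl⟩ := mem_image.1 hd
  by_cases hsc : z ∈ s ↔ z ∈ c
  · convert hc using 1
    ext a
    by_cases haz : a = z
    · subst haz; simp [hsc]
    · have := mt (@mem_powerset.1 hs a); simp_all
  · convert hz using 1
    ext a
    by_cases haz : a = z
    · subst haz; simp [mem_symmDiff]; tauto
    · have := mt (@mem_powerset.1 hs a); simp_all [mem_symmDiff]

end Cubes

lemma exists_isMaximalCubeOf_superset {B C : Finset (Finset X)} (hB : IsCubeOf C B) :
    ∃ B', IsMaximalCubeOf C B' ∧ B ⊆ B' := by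
  obtain ⟨B', hBB', hmax⟩ := Finite.exists_le_maximal hB
  exact ⟨B', ⟨hmax.prop, fun B'' hB'' h => le_antisymm h (hmax.2 hB'' h)⟩, hBB'⟩

lemma IsAmple.erase_of_not_shatters_erase {C : Finset (Finset X)} {c Y : Finset X}
    (hC : IsAmple C) (hc : c ∈ C) (hY : C.Shatters Y) (hY' : ¬ (C.erase c).Shatters Y) :
    IsAmple (C.erase c) := by
  rw [isAmple_iff] at hC ⊢
  have lt : #(C.erase c).shatterer < #C.shatterer :=
    card_lt_card <| (ssubset_iff_of_subset (shatterer_mono (erase_subset c C))).2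
      ⟨Y, mem_shatterer.2 hY, mt mem_shatterer.1 hY'⟩
  have := (C.erase c).card_le_card_shatterer
  have := card_erase_of_mem hc
  have := card_pos.2 ⟨c, hc⟩
  omega

/-- If `C` is ample and `c` is a corner of `C`, then `C \ {c}` is ample. -/
theorem stmt_4 (C : Finset (Finset X)) (hC : IsAmple C) (c : Finset X)
    (hc : IsCornerOf C c) : IsAmple (C.erase c) := by
  obtain ⟨hcC, B, ⟨⟨⟨hBC, Y, hBY⟩, -⟩, -⟩, huniq⟩ := hc
  refine hC.erase_of_not_shatters_erase hcC (hBY.shatters hBC) fun hY => ?_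
  obtain ⟨c', hc', hc'Y⟩ := hY (inter_subset_left : Y ∩ c ⊆ Y)
  obtain ⟨z, hz, hzC⟩ := hC.exists_symmDiff_singleton_mem_s4 hcC (mem_of_mem_erase hc')
    (ne_of_mem_erase hc').symm
  obtain ⟨B', hB', hzB'⟩ := exists_isMaximalCubeOf_superset
    ⟨cubeAt_singleton_subset hcC hzC, {z}, isCubeS_cubeAt c {z}⟩
  obtain rfl : B' = B := huniq B' ⟨hB', hzB' (mem_cubeAt_self c {z})⟩
  have hzY : z ∈ Y :=
    (isCubeS_cubeAt c {z}).subset_of_subset hBY hzB' (mem_singleton_self z)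
  have trace := congrArg (z ∈ ·) hc'Y
  simp only [mem_inter, hzY, true_and, eq_iff_iff] at trace
  rw [mem_symmDiff] at hz
  tauto
end

section
/- Let σ_1,…,σ_m be a sequence of distinct facets of the n-dimensional cross-polytope O_n and let c_1,…,c_m be the corresponding sequence of subsets of X (under the bijection c ↔ σ_c). Then σ_1,…,σ_m is a partial shelling of O_n if and only if every level set C_i = {c_1,…,c_i} is an isometric concept class. -/
variable {X : Type} [Fintype X] [DecidableEq X]

/-!
The facets `σ_a`, `σ_b` meet in `n - d(a, b)` elements, and `σ_a ∩ σ_b ⊆ σ_w ∩ σ_b` exactly when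
`w Δ b ⊆ a Δ b`. So the shelling condition for `σ_j` says that `c_j` has a neighbour among
`c_1, …, c_{j-1}` one step closer to any given earlier `c_i`. In an isometric level set such a
neighbour is the first vertex of a geodesic from `c_j` to `c_i`; conversely, taking these steps
from the later of two concepts builds a geodesic between them by induction on their distance.
-/
open scoped symmDiff

section Hamming

variable {α : Type} [DecidableEq α]

lemma hdist_eq_card_symmDiff_s6 (a b : Finset α) : hdist a b = (a ∆ b).card := rfl

lemma hdist_comm (a b : Finset α) : hdist a b = hdist b a := by
  simp only [hdist_eq_card_symmDiff_s6, symmDiff_comm]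

@[simp] lemma hdist_self (a : Finset α) : hdist a a = 0 := by
  simp [hdist_eq_card_symmDiff_s6]

lemma hdist_eq_zero_iff {a b : Finset α} : hdist a b = 0 ↔ a = b := by
  simp [hdist_eq_card_symmDiff_s6]

lemma hdist_triangle (a b c : Finset α) : hdist a c ≤ hdist a b + hdist b c :=
  (Finset.card_le_card (symmDiff_triangle a b c)).trans (Finset.card_union_le _ _)

lemma hdist_add_one_eq_iff {a b w : Finset α} (hwb : hdist w b = 1) :
    hdist a w + 1 = hdist a b ↔ w ∆ b ⊆ a ∆ b := by
  rw [hdist_eq_card_symmDiff_s6] at hwb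
  obtain ⟨x, hx⟩ := Finset.card_eq_one.mp hwb
  have haw : a ∆ w = (a ∆ b) ∆ {x} := by
    rw [← hx, symmDiff_comm w b, symmDiff_assoc, symmDiff_symmDiff_cancel_left]
  rw [hdist_eq_card_symmDiff_s6, hdist_eq_card_symmDiff_s6, haw, hx, Finset.singleton_subset_iff]
  by_cases hxab : x ∈ a ∆ b
  · have : (a ∆ b) ∆ {x} = (a ∆ b).erase x := by
      ext y; by_cases hy : y = x <;> simp [Finset.mem_symmDiff, hy, hxab]
    simp only [this, Finset.card_erase_add_one hxab, hxab]
  · have : (a ∆ b) ∆ {x} = insert x (a ∆ b) := by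
      ext y; by_cases hy : y = x <;> simp [Finset.mem_symmDiff, hy, hxab]
    simp only [this, Finset.card_insert_of_notMem hxab, hxab, iff_false]
    omega

def HasStepToward (C : Finset (Finset α)) (v u : Finset α) : Prop :=
  ∃ w ∈ C, hdist w v = 1 ∧ hdist u w + 1 = hdist u v

lemma HasStepToward.mono {C D : Finset (Finset α)} {u v : Finset α} (hCD : C ⊆ D)
    (h : HasStepToward C v u) : HasStepToward D v u :=
  let ⟨w, hw, hstep⟩ := h
  ⟨w, hCD hw, hstep⟩

end Hamming

section Facets

@[simp] lemma inl_mem_facet {c : Finset X} {x : X} : Sum.inl x ∈ facet c ↔ x ∈ c := by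
  simp [facet]

@[simp] lemma inr_mem_facet {c : Finset X} {x : X} : Sum.inr x ∈ facet c ↔ x ∉ c := by
  simp [facet]

lemma facet_injective : Function.Injective (facet (X := X)) := fun a b h => by
  ext x
  rw [← inl_mem_facet (c := a), h, inl_mem_facet]

lemma facet_inter_facet (a b : Finset X) :
    facet a ∩ facet b = (a ∩ b).image Sum.inl ∪ (Finset.univ \ (a ∪ b)).image Sum.inr := by
  ext (x | x) <;> simp

lemma card_facet_inter_facet (a b : Finset X) :
    (facet a ∩ facet b).card = Fintype.card X - hdist a b := by
  have hdist_add : hdist a b + (a ∩ b).card = (a ∪ b).card := by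
    rw [hdist_eq_card_symmDiff_s6, symmDiff_eq_sup_sdiff_inf]
    exact Finset.card_sdiff_add_card_eq_card Finset.inter_subset_union
  rw [facet_inter_facet, Finset.card_union_of_disjoint (by simp [Finset.disjoint_left]),
    Finset.card_image_of_injective _ Sum.inl_injective,
    Finset.card_image_of_injective _ Sum.inr_injective, Finset.card_univ_sdiff]
  have := Finset.card_le_univ (a ∪ b)
  omega

lemma facet_inter_facet_subset_iff (a b w : Finset X) :
    facet a ∩ facet b ⊆ facet w ∩ facet b ↔ w ∆ b ⊆ a ∆ b := by
  simp only [Finset.subset_iff, Finset.mem_inter, Sum.forall, inl_mem_facet, inr_mem_facet,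
    Finset.mem_symmDiff]
  constructor
  · rintro ⟨h₁, h₂⟩ x
    have := @h₁ x; have := @h₂ x; tauto
  · intro h
    exact ⟨fun x => by have := @h x; tauto, fun x => by have := @h x; tauto⟩

lemma hdist_le_card (a b : Finset X) : hdist a b ≤ Fintype.card X :=
  Finset.card_le_univ _

lemma facet_shelling_step_iff {a b w : Finset X} (hwb : w ≠ b) :
    ((facet w ∩ facet b).card = Fintype.card X - 1 ∧ facet a ∩ facet b ⊆ facet w ∩ facet b) ↔
      hdist w b = 1 ∧ hdist a w + 1 = hdist a b := by
  rw [card_facet_inter_facet, facet_inter_facet_subset_iff]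
  have hpos : hdist w b ≠ 0 := mt hdist_eq_zero_iff.mp hwb
  have := hdist_le_card w b
  constructor
  · rintro ⟨hcard, hsub⟩
    have h1 : hdist w b = 1 := by omega
    exact ⟨h1, (hdist_add_one_eq_iff h1).2 hsub⟩
  · rintro ⟨h1, hstep⟩
    exact ⟨by rw [h1], (hdist_add_one_eq_iff h1).1 hstep⟩

end Facets

section Isometric

open SimpleGraph

variable {C : Finset (Finset X)}

lemma hdist_le_length {u v : C} (p : (oneInclusionGraph C).Walk u v) :
    hdist u.1 v.1 ≤ p.length := by
  induction p with
  | nil => simp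
  | @cons a b c hab q ih =>
    have hab : hdist a.1 b.1 = 1 := hab
    have := hdist_triangle a.1 b.1 c.1
    rw [Walk.length_cons]
    omega

lemma exists_walk_length_eq_hdist
    (hC : ∀ u ∈ C, ∀ v ∈ C, u ≠ v → HasStepToward C v u ∨ HasStepToward C u v) (u v : C) :
    ∃ p : (oneInclusionGraph C).Walk u v, p.length = hdist u.1 v.1 := by
  suffices ∀ n, ∀ u v : C, hdist u.1 v.1 = n →
      ∃ p : (oneInclusionGraph C).Walk u v, p.length = n from this _ u v rfl
  intro n
  induction n with
  | zero =>
    intro u v huv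
    obtain rfl : u = v := Subtype.ext (hdist_eq_zero_iff.mp huv)
    exact ⟨Walk.nil, rfl⟩
  | succ n ih =>
    intro u v huv
    have hne : u.1 ≠ v.1 := fun h => by simp [h] at huv
    rcases hC u.1 u.2 v.1 v.2 hne with ⟨w, hw, hwv, hstep⟩ | ⟨w, hw, hwu, hstep⟩
    · obtain ⟨p, hp⟩ := ih u ⟨w, hw⟩ (by simp only at hstep ⊢; omega)
      have hadj : (oneInclusionGraph C).Adj ⟨w, hw⟩ v := hwv
      exact ⟨p.concat hadj, by rw [Walk.length_concat, hp]⟩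
    · have := hdist_comm u.1 v.1
      have := hdist_comm w v.1
      obtain ⟨p, hp⟩ := ih ⟨w, hw⟩ v (by simp only; omega)
      have hadj : (oneInclusionGraph C).Adj u ⟨w, hw⟩ := by
        change hdist u.1 w = 1
        rw [hdist_comm, hwu]
      exact ⟨Walk.cons hadj p, by rw [Walk.length_cons, hp]⟩

lemma isIsometric_of_hasStepToward (hne : C.Nonempty)
    (hC : ∀ u ∈ C, ∀ v ∈ C, u ≠ v → HasStepToward C v u ∨ HasStepToward C u v) :
    IsIsometric C := by
  have hconn : (oneInclusionGraph C).Connected := by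
    rw [connected_iff]
    exact ⟨fun u v => ⟨(exists_walk_length_eq_hdist hC u v).choose⟩, hne.coe_sort⟩
  refine ⟨hconn, fun u v => le_antisymm ?_ ?_⟩
  · obtain ⟨p, hp⟩ := exists_walk_length_eq_hdist hC u v
    exact hp ▸ dist_le p
  · obtain ⟨p, hp⟩ := hconn.exists_walk_length_eq_dist u v
    exact hp ▸ hdist_le_length p

lemma IsIsometric.hasStepToward (hC : IsIsometric C) {u v : Finset X} (hu : u ∈ C) (hv : v ∈ C)
    (huv : u ≠ v) : HasStepToward C v u := by
  obtain ⟨p, hp⟩ := hC.1.exists_walk_length_eq_dist ⟨v, hv⟩ ⟨u, hu⟩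
  rw [hC.2] at hp
  simp only at hp
  obtain ⟨w, hadj, q, rfl⟩ := Walk.exists_eq_cons_of_ne (by simpa using huv.symm) p
  have hvw : hdist v w.1 = 1 := hadj
  have hq : hdist w.1 u ≤ q.length := hdist_le_length q
  have := hdist_triangle v w.1 u
  have := hdist_comm u w.1
  have := hdist_comm u v
  rw [Walk.length_cons] at hp
  exact ⟨w.1, w.2, by rw [hdist_comm, hvw], by omega⟩

end Isometric

section LevelSets

lemma List.Nodup.ne_getElem_of_mem_take {α : Type*} {l : List α} (hnd : l.Nodup) {j : ℕ}
    (hj : j < l.length) {u : α} (hu : u ∈ l.take j) : u ≠ l[j] := by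
  obtain ⟨i, hi, rfl⟩ := List.mem_take_iff_getElem.1 hu
  exact fun h => by have := hnd.getElem_inj_iff.1 h; omega

lemma List.getElem_mem_take_of_lt {α : Type*} {l : List α} {i j : ℕ} (hij : i < j)
    (hi : i < l.length) : l[i] ∈ l.take j :=
  List.mem_take_iff_getElem.2 ⟨i, by omega, rfl⟩

variable {l : List (Finset X)}

lemma getD_map_facet {k : ℕ} (hk : k < l.length) : (l.map facet).getD k ∅ = facet l[k] := by
  rw [List.getD_eq_getElem _ _ (by simpa using hk), List.getElem_map]

lemma isPartialShelling_map_facet_iff (hnd : l.Nodup) :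
    IsPartialShelling (l.map facet) ↔
      ∀ j (hj : j < l.length), ∀ u ∈ l.take j, HasStepToward (l.take j).toFinset l[j] u := by
  simp only [IsPartialShelling, List.nodup_map_iff facet_injective, hnd, true_and,
    List.length_map]
  constructor
  · intro h j hj u hu
    obtain ⟨i, hi, rfl⟩ := List.mem_take_iff_getElem.1 hu
    obtain ⟨k, hk, hstep⟩ := h i j (by omega) hj
    have hkmem : l[k] ∈ l.take j := List.getElem_mem_take_of_lt hk _
    rw [getD_map_facet (k := k) (by omega), getD_map_facet hj, getD_map_facet (k := i) (by omega),
      facet_shelling_step_iff (hnd.ne_getElem_of_mem_take hj hkmem)] at hstep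
    exact ⟨l[k], List.mem_toFinset.2 hkmem, hstep⟩
  · intro h i j hij hj
    obtain ⟨w, hw, hstep⟩ := h j hj l[i] (List.getElem_mem_take_of_lt hij _)
    have hw := List.mem_toFinset.1 hw
    obtain ⟨k, hk, rfl⟩ := List.mem_take_iff_getElem.1 hw
    refine ⟨k, by omega, ?_⟩
    rw [getD_map_facet (k := k) (by omega), getD_map_facet hj, getD_map_facet (by omega),
      facet_shelling_step_iff (hnd.ne_getElem_of_mem_take hj hw)]
    exact hstep

lemma isIsometric_take_of_hasStepToward
    (h : ∀ j (hj : j < l.length), ∀ u ∈ l.take j, HasStepToward (l.take j).toFinset l[j] u)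
    {m : ℕ} (hm : 0 < m) (hml : m ≤ l.length) : IsIsometric (l.take m).toFinset := by
  have hmono : ∀ j ≤ m, (l.take j).toFinset ⊆ (l.take m).toFinset := fun j hj u hu =>
    List.mem_toFinset.2 (List.take_subset_take_left l hj (List.mem_toFinset.1 hu))
  refine isIsometric_of_hasStepToward
    ⟨l[0], List.mem_toFinset.2 (List.getElem_mem_take_of_lt hm _)⟩ fun u hu v hv huv => ?_
  obtain ⟨a, ha, rfl⟩ := List.mem_take_iff_getElem.1 (List.mem_toFinset.1 hu)
  obtain ⟨b, hb, rfl⟩ := List.mem_take_iff_getElem.1 (List.mem_toFinset.1 hv)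
  rcases Nat.lt_or_gt_of_ne (fun hab : a = b => huv (by simp [hab])) with hab | hab
  · exact Or.inl ((h b _ l[a] (List.getElem_mem_take_of_lt hab _)).mono (hmono b (by omega)))
  · exact Or.inr ((h a _ l[b] (List.getElem_mem_take_of_lt hab _)).mono (hmono a (by omega)))

lemma IsIsometric.hasStepToward_take {j : ℕ} (hiso : IsIsometric (l.take (j + 1)).toFinset)
    (hj : j < l.length) {u : Finset X} (hu : u ∈ l.take j) (hne : u ≠ l[j]) :
    HasStepToward (l.take j).toFinset l[j] u := by
  have htake : (l.take (j + 1)).toFinset = insert l[j] (l.take j).toFinset := by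
    rw [List.take_add_one, List.getElem?_eq_getElem hj]
    simp only [Option.toList_some, List.toFinset_append, List.toFinset_cons, List.toFinset_nil,
      Finset.insert_empty, Finset.union_singleton]
  obtain ⟨w, hw, hwj, hstep⟩ := hiso.hasStepToward
    (by simp [htake, hu]) (by simp [htake]) hne
  rw [htake, Finset.mem_insert] at hw
  rcases hw with rfl | hw
  · simp at hwj
  · exact ⟨w, hw, hwj, hstep⟩

end LevelSets

/-- A sequence of distinct facets of the cross-polytope is a partial
shelling if and only if every level set of the corresponding sequence of subsets of `X`
is an isometric concept class. -/
theorem stmt_6 (l : List (Finset X)) (hnd : l.Nodup) :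
    IsPartialShelling (l.map facet) ↔
      ∀ i, 0 < i → i ≤ l.length → IsIsometric (l.take i).toFinset := by
  rw [isPartialShelling_map_facet_iff hnd]
  refine ⟨fun h m hm hml => isIsometric_take_of_hasStepToward h hm hml, fun h j hj u hu => ?_⟩
  exact (h (j + 1) j.succ_pos hj).hasStepToward_take hj hu (hnd.ne_getElem_of_mem_take hj hu)
end
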